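/- arXiv:1807.05000 — 5 statements merged into one kernel-verified Lean document; each statement's English description precedes it below -/
import Mathlib

section
/- For every nonnegative integer u, Σ_{m=0}^{⌊u/2⌋} 4^m · C(u−2m, m) = 2^{u−1} + (1/4)(1 − i/√7)·((−1+i√7)/2)^u + (1/4)(1 + i/√7)·((−1−i√7)/2)^u, where the right-hand side is interpreted as a complex expression that evaluates to a real (in fact rational dyadic) number. -/
/-!
Both sides satisfy `a (u + 3) = a (u + 2) + 4 * a u`: the sum by Pascal's rule, the closed
form because `2` and `(-1 ± i√7) / 2` are the roots of
`z ^ 3 - z ^ 2 - 4 = (z - 2) * (z ^ 2 + z + 2)`.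
Both sides equal `1` for `u = 0, 1, 2`, so they agree everywhere.
-/

open Finset Complex

section WeightedChooseSum

variable {R : Type*} [CommSemiring R]

/-- The compositions of `u` into parts `1` and `3`, with weight `c` per part `3`: there are
`(u - 2 * m).choose m` of them with `m` threes. Splitting off the last part gives
`x (u + 3) = x (u + 2) + c * x u`. -/
def weightedChooseSum (c : R) (u : ℕ) : R :=
  ∑ m ∈ range (u / 2 + 1), c ^ m * ((u - 2 * m).choose m : R)

def partsOneThreeRecurrence (c : R) : LinearRecurrence R := ⟨3, ![c, 0, 1]⟩

theorem partsOneThreeRecurrence_isSolution_iff (c : R) (x : ℕ → R) :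
    (partsOneThreeRecurrence c).IsSolution x ↔ ∀ n, x (n + 3) = x (n + 2) + c * x n := by
  change (∀ n, x (n + 3) = ∑ i : Fin 3, ![c, 0, 1] i * x (n + i)) ↔ _
  simp [Fin.sum_univ_three, add_comm]

theorem Nat.choose_sub_two_mul_eq_zero {u m : ℕ} (h : u < 2 * m) : (u - 2 * m).choose m = 0 :=
  Nat.choose_eq_zero_of_lt (by omega)

theorem Nat.choose_succ_sub_two_mul (u m : ℕ) :
    (u + 1 - 2 * m).choose (m + 1) = (u - 2 * m).choose m + (u - 2 * m).choose (m + 1) := by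
  rcases le_or_gt (2 * m) u with h | h
  · rw [show u + 1 - 2 * m = u - 2 * m + 1 by omega, Nat.choose_succ_succ]
  · rw [show u + 1 - 2 * m = 0 by omega, Nat.choose_sub_two_mul_eq_zero h,
      Nat.choose_eq_zero_of_lt (by omega : u - 2 * m < m + 1), Nat.choose_zero_succ]

theorem weightedChooseSum_eq_sum_range (c : R) {u n : ℕ} (h : u / 2 < n) :
    weightedChooseSum c u = ∑ m ∈ range n, c ^ m * ((u - 2 * m).choose m : R) := by
  refine sum_subset (range_subset_range.mpr (by omega)) fun m _ hm => ?_
  rw [mem_range, not_lt] at hm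
  rw [Nat.choose_sub_two_mul_eq_zero (by omega), Nat.cast_zero, mul_zero]

theorem weightedChooseSum_add_three (c : R) (u : ℕ) :
    weightedChooseSum c (u + 3) = weightedChooseSum c (u + 2) + c * weightedChooseSum c u := by
  have hpascal : ∀ m, c ^ (m + 1) * ((u + 3 - 2 * (m + 1)).choose (m + 1) : R) =
      c ^ (m + 1) * ((u + 2 - 2 * (m + 1)).choose (m + 1) : R) +
        c * (c ^ m * ((u - 2 * m).choose m : R)) := by
    intro m
    rw [show u + 3 - 2 * (m + 1) = u + 1 - 2 * m by omega,
      show u + 2 - 2 * (m + 1) = u - 2 * m by omega, Nat.choose_succ_sub_two_mul]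
    push_cast
    ring
  have h3 := weightedChooseSum_eq_sum_range c (u := u + 3) (n := u + 3 + 1) (by omega)
  have h2 := weightedChooseSum_eq_sum_range c (u := u + 2) (n := u + 3 + 1) (by omega)
  rw [sum_range_succ'] at h3 h2
  rw [h3, h2, weightedChooseSum_eq_sum_range c (n := u + 3) (by omega), mul_sum]
  simp only [hpascal, sum_add_distrib, pow_zero, Nat.choose_zero_right, Nat.cast_one, mul_one]
  ring

theorem partsOneThreeRecurrence_isSolution_weightedChooseSum (c : R) :
    (partsOneThreeRecurrence c).IsSolution (weightedChooseSum c) :=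
  (partsOneThreeRecurrence_isSolution_iff c _).mpr (weightedChooseSum_add_three c)

theorem weightedChooseSum_of_lt_three (c : R) {n : ℕ} (hn : n < 3) :
    weightedChooseSum c n = 1 := by
  interval_cases n <;> simp [weightedChooseSum, sum_range_succ]

end WeightedChooseSum

theorem partsOneThreeRecurrence_isSolution_pow {R : Type*} [CommRing R] {c r : R}
    (hr : r ^ 3 = r ^ 2 + c) : (partsOneThreeRecurrence c).IsSolution (r ^ ·) :=
  (partsOneThreeRecurrence_isSolution_iff c _).mpr fun n => by
    simp only [pow_add]
    linear_combination r ^ n * hr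

theorem pow_three_eq_sq_add_four {R : Type*} [CommRing R] {z : R} (hz : z ^ 2 + z + 2 = 0) :
    z ^ 3 = z ^ 2 + 4 := by
  linear_combination (z - 2) * hz

noncomputable def closedForm (s : ℂ) (u : ℕ) : ℂ :=
  2 ^ u / 2 + 1 / 4 * (1 - I / s) * ((-1 + I * s) / 2) ^ u
    + 1 / 4 * (1 + I / s) * ((-1 - I * s) / 2) ^ u

section ClosedForm

variable {s : ℂ}

theorem partsOneThreeRecurrence_isSolution_closedForm (hs : s ^ 2 = 7) :
    (partsOneThreeRecurrence (4 : ℂ)).IsSolution (closedForm s) := by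
  have hgeom : ∀ z : ℂ, z ^ 3 = z ^ 2 + 4 →
      (z ^ ·) ∈ (partsOneThreeRecurrence (4 : ℂ)).solSpace :=
    fun z hz => partsOneThreeRecurrence_isSolution_pow hz
  have hdecomp : closedForm s = (1 / 2 : ℂ) • (2 ^ ·)
      + (1 / 4 * (1 - I / s)) • (((-1 + I * s) / 2) ^ ·)
      + (1 / 4 * (1 + I / s)) • (((-1 - I * s) / 2) ^ ·) := by
    ext u
    simp only [closedForm, Pi.add_apply, Pi.smul_apply, smul_eq_mul]
    ring
  rw [LinearRecurrence.is_sol_iff_mem_solSpace, hdecomp]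
  refine add_mem (add_mem (Submodule.smul_mem _ _ (hgeom 2 (by norm_num)))
    (Submodule.smul_mem _ _ (hgeom _ (pow_three_eq_sq_add_four ?_))))
    (Submodule.smul_mem _ _ (hgeom _ (pow_three_eq_sq_add_four ?_)))
  all_goals linear_combination s ^ 2 / 4 * I_sq - hs / 4

theorem closedForm_of_lt_three (hs : s ^ 2 = 7) {n : ℕ} (hn : n < 3) : closedForm s n = 1 := by
  have hs0 : s ≠ 0 := by rintro rfl; norm_num at hs
  interval_cases n <;> simp only [closedForm] <;> field_simp
  · ring
  · linear_combination -2 * s * I_sq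
  · linear_combination (2 * s ^ 3 + 4 * s) * I_sq - 2 * s * hs

theorem weightedChooseSum_four_eq_closedForm (hs : s ^ 2 = 7) :
    weightedChooseSum (4 : ℂ) = closedForm s := by
  rw [(partsOneThreeRecurrence (4 : ℂ)).eq_iff_eqOn_range_order _ _
    (partsOneThreeRecurrence_isSolution_weightedChooseSum 4)
    (partsOneThreeRecurrence_isSolution_closedForm hs)]
  intro n hn
  have hn3 : n < 3 := by simpa [partsOneThreeRecurrence] using hn
  rw [weightedChooseSum_of_lt_three 4 hn3, closedForm_of_lt_three hs hn3]

end ClosedForm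

theorem closed_form_a_u (u : ℕ) :
    (∑ m ∈ Finset.range (u / 2 + 1),
        (4 : ℂ) ^ m * (Nat.choose (u - 2 * m) m : ℂ)) =
      (2 : ℂ) ^ ((u : ℤ) - 1)
        + (1 / 4) * (1 - Complex.I / (Real.sqrt 7 : ℂ)) *
            (((-1 + Complex.I * (Real.sqrt 7 : ℂ)) / 2) ^ u)
        + (1 / 4) * (1 + Complex.I / (Real.sqrt 7 : ℂ)) *
            (((-1 - Complex.I * (Real.sqrt 7 : ℂ)) / 2) ^ u) := by
  have hsqrt : ((Real.sqrt 7 : ℝ) : ℂ) ^ 2 = 7 := by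
    rw [← ofReal_pow, Real.sq_sqrt (by norm_num)]
    norm_num
  rw [zpow_sub₀ two_ne_zero, zpow_natCast, zpow_one]
  exact congrFun (weightedChooseSum_four_eq_closedForm hsqrt) u
end

section
/- For all integers m ≥ 0 and n > 0, with u(m,n) := Σ_{y=n}^{⌊m/2⌋} 2^{2y−m}·C(m−2y, y), one has 2·u(m,n) + u(m−1,n) + u(m−2,n) = Σ_{y=0}^{m−2n−1} 2^{−y}·C(y, n−1) (where sums with negative upper limit are 0). -/
open Finset

/-- Binomial coefficient on the integers, with `C a b = 0` unless `0 ≤ b ≤ a`. -/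
def C (a b : ℤ) : ℚ := if 0 ≤ b ∧ b ≤ a then (Nat.choose a.toNat b.toNat : ℚ) else 0

/-- `u(m,n) = Σ_{y=n}^{⌊m/2⌋} 2^{2y−m} · C(m−2y, y)`. -/
noncomputable def U (m n : ℤ) : ℚ := ∑ y ∈ Finset.Icc n (m / 2), (2 : ℚ) ^ (2 * y - m) * C (m - 2 * y) y

/-!
Pascal's rule `C(a, b) = C(a - 1, b) + C(a - 1, b - 1)`, applied to every summand of `u(m, n)`,
gives `2 u(m) = u(m - 1) + u(m - 3) + 2^(2n - m + 1) C(m - 2n - 1, n - 1)`. Hence the left-hand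
side grows from `m` to `m + 1` by `2^(-(m - 2n)) C(m - 2n, n - 1)`, which is exactly the new term
of the right-hand side. The difference of the two sides is thus 1-periodic on `ℤ`, and it
vanishes at `m = 0`.
-/

lemma C_eq_zero {a b : ℤ} (h : b < 0 ∨ a < b) : C a b = 0 :=
  if_neg (by omega)

lemma C_natCast (a b : ℕ) : C a b = a.choose b := by
  rcases le_or_gt b a with hba | hab
  · rw [C, if_pos (by omega), Int.toNat_natCast, Int.toNat_natCast]
  · rw [C_eq_zero (by omega), Nat.choose_eq_zero_of_lt hab, Nat.cast_zero]

lemma C_eq_add {a b : ℤ} (hb : 0 < b) : C a b = C (a - 1) b + C (a - 1) (b - 1) := by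
  obtain ⟨k, rfl⟩ : ∃ k : ℕ, b = k + 1 := ⟨b.toNat - 1, by omega⟩
  rcases lt_or_ge a 1 with ha | ha
  · rw [C_eq_zero (Or.inr (by omega)), C_eq_zero (Or.inr (by omega)),
      C_eq_zero (Or.inr (by omega)), add_zero]
  obtain ⟨i, rfl⟩ : ∃ i : ℕ, a = i + 1 := ⟨a.toNat - 1, by omega⟩
  have h := C_natCast (i + 1) (k + 1)
  have h' := C_natCast i (k + 1)
  push_cast at h h'
  rw [h, add_sub_cancel_right, add_sub_cancel_right, h', C_natCast,
    Nat.choose_succ_succ', Nat.cast_add, add_comm]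

lemma sum_Icc_comp_sub_one {M : Type*} [AddCommMonoid M] (f : ℤ → M) (a b : ℤ) :
    ∑ y ∈ Icc a b, f (y - 1) = ∑ z ∈ Icc (a - 1) (b - 1), f z := by
  simpa using (sum_map (Icc (a - 1) (b - 1)) (addRightEmbedding 1) (fun y => f (y - 1)))

def uTerm (m y : ℤ) : ℚ := (2 : ℚ) ^ (2 * y - m) * C (m - 2 * y) y

lemma uTerm_eq_zero {m y : ℤ} (h : m / 2 < y) : uTerm m y = 0 := by
  rw [uTerm, C_eq_zero (by omega), mul_zero]

lemma two_mul_uTerm (m : ℤ) {y : ℤ} (hy : 0 < y) :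
    2 * uTerm m y = uTerm (m - 1) y + uTerm (m - 3) (y - 1) := by
  rw [uTerm, uTerm, uTerm, show 2 * y - (m - 1) = 2 * y - m + 1 by ring,
    show 2 * (y - 1) - (m - 3) = 2 * y - m + 1 by ring, show m - 1 - 2 * y = m - 2 * y - 1 by ring,
    show m - 3 - 2 * (y - 1) = m - 2 * y - 1 by ring, zpow_add_one₀ two_ne_zero, C_eq_add hy]
  ring

lemma U_eq_sum_Icc {m n N : ℤ} (hN : m / 2 ≤ N) : U m n = ∑ y ∈ Icc n N, uTerm m y :=
  sum_subset (Icc_subset_Icc_right hN) fun _ hy hy' ↦ by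
    simp only [mem_Icc] at hy hy'
    exact uTerm_eq_zero (by omega)

lemma U_eq_zero {m n : ℤ} (h : m < 2 * n) : U m n = 0 := by
  rw [U, Icc_eq_empty (by omega), sum_empty]

lemma two_mul_U (m : ℤ) {n : ℤ} (hn : 0 < n) :
    2 * U m n = U (m - 1) n + U (m - 3) n + uTerm (m - 3) (n - 1) := by
  set N := max n (m / 2)
  calc 2 * U m n = ∑ y ∈ Icc n N, 2 * uTerm m y := by
        rw [U_eq_sum_Icc (le_max_right _ _), mul_sum]
    _ = ∑ y ∈ Icc n N, uTerm (m - 1) y + ∑ y ∈ Icc n N, uTerm (m - 3) (y - 1) := by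
        rw [← sum_add_distrib]
        exact sum_congr rfl fun y hy ↦ two_mul_uTerm m (by simp only [mem_Icc] at hy; omega)
    _ = U (m - 1) n + (uTerm (m - 3) (n - 1) + U (m - 3) n) := by
        rw [U_eq_sum_Icc (show (m - 1) / 2 ≤ N by omega), sum_Icc_comp_sub_one,
          ← insert_Icc_left_eq_Icc_sub_one (by omega), sum_insert (by simp),
          U_eq_sum_Icc (show (m - 3) / 2 ≤ N - 1 by omega)]
    _ = _ := by ring

lemma sum_Icc_zero_eq_sum_Icc_sub_one_add (k j : ℤ) (hj : 0 ≤ j) :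
    ∑ y ∈ Icc 0 k, (2 : ℚ) ^ (-y) * C y j
      = ∑ y ∈ Icc 0 (k - 1), (2 : ℚ) ^ (-y) * C y j + 2 ^ (-k) * C k j := by
  rcases lt_or_ge k 0 with hk | hk
  · rw [Icc_eq_empty (by omega), Icc_eq_empty (by omega), C_eq_zero (by omega)]
    simp
  · rw [← insert_Icc_sub_one_right_eq_Icc hk, sum_insert (by simp), add_comm]

theorem two_U_add_general (m n : ℤ) (hn : 0 < n) :
    2 * U m n + U (m - 1) n + U (m - 2) n =
      ∑ y ∈ Finset.Icc 0 (m - 2 * n - 1), (2 : ℚ) ^ (-y) * C y (n - 1) := by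
  set F : ℤ → ℚ := fun k ↦ 2 * U k n + U (k - 1) n + U (k - 2) n -
    ∑ y ∈ Icc 0 (k - 2 * n - 1), (2 : ℚ) ^ (-y) * C y (n - 1)
  have hF : F.Periodic 1 := fun k ↦ by
    simp only [F]
    rw [two_mul_U (k + 1) hn, show k + 1 - 2 * n - 1 = k - 2 * n by ring,
      sum_Icc_zero_eq_sum_Icc_sub_one_add _ _ (by omega), uTerm]
    ring_nf
  have hF0 : F 0 = 0 := by
    simp only [F, U_eq_zero (show (0 : ℤ) < 2 * n by omega),
      U_eq_zero (show (0 : ℤ) - 1 < 2 * n by omega), U_eq_zero (show (0 : ℤ) - 2 < 2 * n by omega),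
      Icc_eq_empty (show ¬(0 : ℤ) ≤ 0 - 2 * n - 1 by omega)]
    simp
  have := hF.int_mul_eq m
  rwa [mul_one, hF0, sub_eq_zero] at this

theorem two_U_add (m n : ℤ) (hm : 0 ≤ m) (hn : 0 < n) :
    2 * U m n + U (m - 1) n + U (m - 2) n =
      ∑ y ∈ Finset.Icc 0 (m - 2 * n - 1), (2 : ℚ) ^ (-y) * C y (n - 1) :=
  two_U_add_general m n hn
end

section
/- Let s(u) = Σ_{z=0}^{⌊u/2⌋} 4^z·C(u−2z, z). Then for all integers m ≥ 6, s(m−2) + 3·s(m−4) + 4·s(m−6) = 2^{m−2}, and consequently 2·(s(m−2) + s(m−3) + 2·s(m−4)) = 2^{m−1}. -/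
/-!
The recurrence `s (u + 3) = s (u + 2) + 4 s u` is Pascal's rule applied termwise. Its
characteristic polynomial is `x³ - x² - 4 = (x - 2)(x² + x + 2)`, and the combination
`s (n + 4) + 3 s (n + 2) + 4 s n` corresponds to `x⁴ + 3x² + 4 = (x² + x + 2)(x² - x + 2)`,
which kills the two complex roots: only the root `2` survives, so the combination doubles at
each step.
-/

open Finset

/-- `s u = Σ_{z=0}^{⌊u/2⌋} 4^z · C(u−2z, z)`. -/
def s (u : ℕ) : ℕ := ∑ z ∈ Finset.range (u / 2 + 1), 4 ^ z * Nat.choose (u - 2 * z) z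

lemma s_eq_sum_range {u N : ℕ} (h : u / 2 < N) :
    s u = ∑ z ∈ range N, 4 ^ z * (u - 2 * z).choose z := by
  refine sum_subset (range_subset_range.mpr h) fun z _ hz => ?_
  have hz : u / 2 < z := by simpa using hz
  rw [show u - 2 * z = 0 by omega, Nat.choose_eq_zero_of_lt (by omega), mul_zero]

-- For `u < 2 z` all three coefficients vanish, since the truncated upper index is `0`.
lemma choose_sub_two_mul_succ (u z : ℕ) :
    (u + 3 - 2 * (z + 1)).choose (z + 1) =
      (u + 2 - 2 * (z + 1)).choose (z + 1) + (u - 2 * z).choose z := by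
  rcases le_or_gt (2 * z) u with h | h
  · rw [show u + 3 - 2 * (z + 1) = u - 2 * z + 1 by omega,
      show u + 2 - 2 * (z + 1) = u - 2 * z by omega, Nat.choose_succ_succ', add_comm]
  · rw [show u + 3 - 2 * (z + 1) = 0 by omega, show u + 2 - 2 * (z + 1) = 0 by omega,
      show u - 2 * z = 0 by omega]
    simp [Nat.choose_eq_zero_of_lt, show 0 < z by omega]

lemma s_add_three (u : ℕ) : s (u + 3) = s (u + 2) + 4 * s u := by
  have hterm (z : ℕ) : 4 ^ (z + 1) * (u + 3 - 2 * (z + 1)).choose (z + 1) =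
      4 ^ (z + 1) * (u + 2 - 2 * (z + 1)).choose (z + 1) + 4 * (4 ^ z * (u - 2 * z).choose z) := by
    rw [choose_sub_two_mul_succ]
    ring
  rw [s_eq_sum_range (N := u + 3) (by omega), s_eq_sum_range (N := u + 3) (by omega),
    s_eq_sum_range (N := u + 2) (by omega),
    sum_range_succ' (fun z => 4 ^ z * (u + 3 - 2 * z).choose z),
    sum_range_succ' (fun z => 4 ^ z * (u + 2 - 2 * z).choose z),
    sum_congr rfl fun z _ => hterm z, sum_add_distrib, mul_sum]
  simp only [pow_zero, mul_zero, Nat.sub_zero, Nat.choose_zero_right]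
  ring

lemma s_combination_succ (n : ℕ) :
    s (n + 5) + 3 * s (n + 3) + 4 * s (n + 1) = 2 * (s (n + 4) + 3 * s (n + 2) + 4 * s n) := by
  have h₀ := s_add_three n
  have h₁ : s (n + 4) = s (n + 3) + 4 * s (n + 1) := s_add_three (n + 1)
  have h₂ : s (n + 5) = s (n + 4) + 4 * s (n + 2) := s_add_three (n + 2)
  omega

lemma s_combination_eq_pow (n : ℕ) : s (n + 4) + 3 * s (n + 2) + 4 * s n = 2 ^ (n + 4) := by
  induction n with
  | zero => decide
  | succ n ih => rw [s_combination_succ, ih]; ring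

theorem s_combination_shifted (m : ℕ) (hm : 6 ≤ m) :
    s (m - 2) + 3 * s (m - 4) + 4 * s (m - 6) = 2 ^ (m - 2) ∧
    2 * (s (m - 2) + s (m - 3) + 2 * s (m - 4)) = 2 ^ (m - 1) := by
  obtain ⟨n, rfl⟩ : ∃ n, m = n + 6 := ⟨m - 6, by omega⟩
  have hcomb := s_combination_eq_pow n
  have hrec := s_add_three n
  refine ⟨hcomb, ?_⟩
  rw [show n + 6 - 1 = n + 4 + 1 by omega, pow_succ]
  change 2 * (s (n + 4) + s (n + 3) + 2 * s (n + 2)) = _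
  omega
end

section
/- Define f̄_x(m,p) = C(x−m+p+α, m+β)·C(x+m−p+γ, p+δ), ḡ_x(m,p) = C(x−m+p−1+α, m+β)·C(x+m−p+γ, p+δ), h̄_x(m,p) = C(x−m+p−1+α, m+β)·C(x+m−p+γ, p−1+δ). Then f̄_{x+1}(m,p) = f̄_x(m,p) + f̄_x(m−1,p−1) + ḡ_x(m−1,p) + ḡ_x(m−1,p−1) + h̄_x(m,p) + h̄_x(m−1,p); ḡ_{x+1}(m,p) = f̄_x(m,p) + ḡ_x(m−1,p−1) + h̄_x(m,p); h̄_{x+1}(m,p) = f̄_x(m,p−1) + ḡ_x(m−1,p−1) + h̄_x(m−1,p−1), in the range where all binomial arguments are nonnegative. -/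
/-!
Write `A = x - m + p + α`, `B = x + m - p + γ`, `M = m + β`, `P = p + δ`. Every term is a product
`C A' M' * C B' P'` whose arguments differ from `A, M, B, P` by at most two, and Pascal's rule in the
upper index of each factor, applied at most twice, expands both sides into the same sum. Pascal's
rule `C (a + 1) b = C a b + C a (b - 1)` fails at `a = -1`; the hypotheses keep every upper index
at which it is applied nonnegative.
-/

open Finset

def fb (α β γ δ x m p : ℤ) : ℚ := C (x - m + p + α) (m + β) * C (x + m - p + γ) (p + δ)
def gb (α β γ δ x m p : ℤ) : ℚ := C (x - m + p - 1 + α) (m + β) * C (x + m - p + γ) (p + δ)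
def hb (α β γ δ x m p : ℤ) : ℚ := C (x - m + p - 1 + α) (m + β) * C (x + m - p + γ) (p - 1 + δ)

lemma C_of_neg {a b : ℤ} (hb : b < 0) : C a b = 0 := by
  simp [C, hb.not_ge]

lemma C_natCast_s10 (n k : ℕ) : C n k = n.choose k := by
  unfold C
  split_ifs with h
  · simp
  · rw [Nat.choose_eq_zero_of_lt (by omega), Nat.cast_zero]

lemma C_add_one (a b : ℤ) (ha : 0 ≤ a) : C (a + 1) b = C a b + C a (b - 1) := by
  lift a to ℕ using ha
  rcases lt_or_ge b 0 with hb | hb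
  · rw [C_of_neg hb, C_of_neg hb, C_of_neg (by omega), add_zero]
  lift b to ℕ using hb
  cases b with
  | zero => simp [C]; omega
  | succ k =>
    rw [Nat.cast_succ, add_sub_cancel_right, ← Nat.cast_succ, ← Nat.cast_succ, C_natCast_s10,
      C_natCast_s10, C_natCast_s10, Nat.choose_succ_succ', Nat.cast_add, add_comm]

section

variable {A B M P : ℤ}

lemma C_add_one_mul_C_add_one (hA : 1 ≤ A) (hB : 1 ≤ B) :
    C (A + 1) M * C (B + 1) P =
      C A M * C B P + C A (M - 1) * C B (P - 1) + C A (M - 1) * C (B - 1) P +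
        C (A - 1) (M - 1) * C B (P - 1) + C (A - 1) M * C B (P - 1) +
        C A (M - 1) * C (B - 1) (P - 1) := by
  have hA' := C_add_one (A - 1) M (by omega)
  have hB' := C_add_one (B - 1) P (by omega)
  rw [sub_add_cancel] at hA' hB'
  rw [C_add_one A M (by omega), C_add_one B P (by omega), hA', hB']
  ring

lemma C_mul_C_add_one (hA : 1 ≤ A) (hB : 0 ≤ B) :
    C A M * C (B + 1) P =
      C A M * C B P + C (A - 1) (M - 1) * C B (P - 1) + C (A - 1) M * C B (P - 1) := by
  have hA' := C_add_one (A - 1) M (by omega)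
  rw [sub_add_cancel] at hA'
  rw [C_add_one B P hB, hA']
  ring

lemma C_mul_C_add_one_sub_one (hA : 1 ≤ A) (hB : 0 ≤ B) :
    C A M * C (B + 1) (P - 1) =
      C (A - 1) M * C (B + 1) (P - 1) + C (A - 1) (M - 1) * C B (P - 1) +
        C (A - 1) (M - 1) * C B (P - 1 - 1) := by
  have hA' := C_add_one (A - 1) M (by omega)
  rw [sub_add_cancel] at hA'
  rw [hA', C_add_one B (P - 1) hB]
  ring

end

theorem fgh_bar_recurrence (α β γ δ x m p : ℤ)
    (h1 : 0 ≤ x - m + p + α - 1) (h2 : 0 ≤ x + m - p + γ - 1) :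
    fb α β γ δ (x + 1) m p =
        fb α β γ δ x m p + fb α β γ δ x (m - 1) (p - 1) + gb α β γ δ x (m - 1) p +
          gb α β γ δ x (m - 1) (p - 1) + hb α β γ δ x m p + hb α β γ δ x (m - 1) p ∧
    gb α β γ δ (x + 1) m p =
        fb α β γ δ x m p + gb α β γ δ x (m - 1) (p - 1) + hb α β γ δ x m p ∧
    hb α β γ δ (x + 1) m p =
        fb α β γ δ x m (p - 1) + gb α β γ δ x (m - 1) (p - 1) + hb α β γ δ x (m - 1) (p - 1) := by
  simp only [fb, gb, hb]
  -- `ring_nf` also normalizes the integer arguments of `C`, matching e.g. `x + 1 - m + p + α`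
  -- with `(x - m + p + α) + 1`.
  refine ⟨?_, ?_, ?_⟩
  · linear_combination (norm := ring_nf)
      C_add_one_mul_C_add_one (M := m + β) (P := p + δ) (by omega : 1 ≤ x - m + p + α)
        (by omega : 1 ≤ x + m - p + γ)
  · linear_combination (norm := ring_nf)
      C_mul_C_add_one (M := m + β) (P := p + δ) (by omega : 1 ≤ x - m + p + α)
        (by omega : 0 ≤ x + m - p + γ)
  · linear_combination (norm := ring_nf)
      C_mul_C_add_one_sub_one (M := m + β) (P := p + δ) (by omega : 1 ≤ x - m + p + α)
        (by omega : 0 ≤ x + m - p + γ)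
end

section
/- Define s̄(m,n) = Σ_{z=0}^{min{m,n}} Σ_{y=0}^{min{m,n}−z} 4^{y+z}·C(m−y−z, y)·C(n−y−z, z) (zero if m<0 or n<0). Then for all integers m, n ≥ 0, s̄(m, n+1) = s̄(m,n) + 4·s̄(m−1, n−1) + [m ≥ n+1]·4^{n+1}·C(m−n−1, n+1). -/
open Finset

/-- `s̄(m,n) = Σ_{z=0}^{min{m,n}} Σ_{y=0}^{min{m,n}−z} 4^{y+z}·C(m−y−z, y)·C(n−y−z, z)`,
set to `0` when `m < 0` or `n < 0`. -/
noncomputable def sbar (m n : ℤ) : ℚ :=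
  if m < 0 ∨ n < 0 then 0
  else ∑ z ∈ Finset.Icc 0 (min m n), ∑ y ∈ Finset.Icc 0 (min m n - z),
    (4 : ℚ) ^ (y + z) * C (m - y - z) y * C (n - y - z) z

/-!
Pascal's rule on the factor `C(n+1-y-z, z)` splits the `(y, z)`-term of `s̄(m, n+1)` into the
`(y, z)`-term of `s̄(m, n)`, four times the `(y, z-1)`-term of `s̄(m-1, n-1)`, and a boundary
correction at `(y, z) = (n+1, 0)`, the one place where Pascal's rule for `C` on `ℤ` fails
(`C 0 0 = 1` while `C (-1) 0 = C (-1) (-1) = 0`). Since the summand vanishes outside the triangle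
`y, z ≥ 0, y + z ≤ min m n`, all three sums may be taken over one common box.
-/

lemma C_eq_zero_of_neg_left {a : ℤ} (ha : a < 0) (b : ℤ) : C a b = 0 := by
  rw [C, if_neg (by omega)]

lemma C_eq_zero_of_neg_right (a : ℤ) {b : ℤ} (hb : b < 0) : C a b = 0 := by
  rw [C, if_neg (by omega)]

lemma C_eq_zero_of_lt {a b : ℤ} (h : a < b) : C a b = 0 := by
  rw [C, if_neg (by omega)]

lemma C_pascal (a b : ℤ) :
    C a b = C (a - 1) b + C (a - 1) (b - 1) + if a = 0 ∧ b = 0 then 1 else 0 := by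
  rcases lt_or_ge b 0 with hb | hb
  · simp [C_eq_zero_of_neg_right _ hb, C_eq_zero_of_neg_right _ (show b - 1 < 0 by omega), hb.ne]
  rcases lt_or_ge a 0 with ha | ha
  · simp [C_eq_zero_of_neg_left ha, C_eq_zero_of_neg_left (show a - 1 < 0 by omega), ha.ne]
  lift a to ℕ using ha
  lift b to ℕ using hb
  rcases a with _ | j <;> rcases b with _ | k
  · simp [C]
  · simp [C_eq_zero_of_lt, C_eq_zero_of_neg_left, show (k : ℤ) + 1 ≠ 0 by omega]
  · simp [C, show (0 : ℤ) ≤ j + 1 by omega, show (j : ℤ) + 1 ≠ 0 by omega]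
  · have hj : ((j + 1 : ℕ) : ℤ) - 1 = j := by omega
    have hk : ((k + 1 : ℕ) : ℤ) - 1 = k := by omega
    rw [hj, hk, C_natCast, C_natCast, C_natCast, Nat.choose_succ_succ, if_neg (by omega)]
    push_cast
    ring

/-- The summand of `sbar m n` at `p = (y, z)`. -/
def sbarTerm (m n : ℤ) (p : ℤ × ℤ) : ℚ :=
  4 ^ (p.1 + p.2) * C (m - p.1 - p.2) p.1 * C (n - p.1 - p.2) p.2

noncomputable def triangle (M : ℤ) : Finset (ℤ × ℤ) :=
  (Icc 0 M ×ˢ Icc 0 M).filter fun p => p.1 + p.2 ≤ M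

lemma mem_triangle {M : ℤ} {p : ℤ × ℤ} :
    p ∈ triangle M ↔ 0 ≤ p.1 ∧ 0 ≤ p.2 ∧ p.1 + p.2 ≤ M := by
  simp only [triangle, mem_filter, mem_product, mem_Icc]
  omega

lemma sbarTerm_eq_zero_of_notMem_triangle {m n : ℤ} {p : ℤ × ℤ}
    (hp : p ∉ triangle (min m n)) : sbarTerm m n p = 0 := by
  rw [mem_triangle] at hp
  unfold sbarTerm
  rcases lt_or_ge p.1 0 with h1 | h1
  · rw [C_eq_zero_of_neg_right _ h1]; ring
  rcases lt_or_ge p.2 0 with h2 | h2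
  · rw [C_eq_zero_of_neg_right _ h2]; ring
  rcases lt_or_ge m (p.1 + p.2) with hm | hn
  · rw [C_eq_zero_of_neg_left (show m - p.1 - p.2 < 0 by omega)]; ring
  · rw [C_eq_zero_of_neg_left (show n - p.1 - p.2 < 0 by omega)]; ring

lemma sbar_eq_sum_triangle (m n : ℤ) :
    sbar m n = ∑ p ∈ triangle (min m n), sbarTerm m n p := by
  rw [sum_finset_product_right _ (Icc 0 (min m n)) fun z => Icc 0 (min m n - z)]
  · unfold sbar sbarTerm
    split_ifs with h
    · rw [Icc_eq_empty (by omega), sum_empty]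
    · rfl
  · intro p
    simp only [mem_triangle, mem_Icc]
    omega

lemma sbar_eq_sum_of_triangle_subset {m n : ℤ} {s : Finset (ℤ × ℤ)}
    (hs : triangle (min m n) ⊆ s) : sbar m n = ∑ p ∈ s, sbarTerm m n p := by
  rw [sbar_eq_sum_triangle]
  exact sum_subset hs fun p _ hp => sbarTerm_eq_zero_of_notMem_triangle hp

lemma sbarTerm_add_one_right (m n : ℤ) (p : ℤ × ℤ) :
    sbarTerm m (n + 1) p = sbarTerm m n p + 4 * sbarTerm (m - 1) (n - 1) (p.1, p.2 - 1) +
      if p = (n + 1, 0) then 4 ^ (n + 1) * C (m - n - 1) (n + 1) else 0 := by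
  obtain ⟨y, z⟩ := p
  simp only [sbarTerm, Prod.mk.injEq]
  rw [C_pascal (n + 1 - y - z) z, show n + 1 - y - z - 1 = n - y - z by ring,
    show m - 1 - y - (z - 1) = m - y - z by ring, show n - 1 - y - (z - 1) = n - y - z by ring]
  by_cases h : y = n + 1 ∧ z = 0
  · obtain ⟨rfl, rfl⟩ := h
    rw [C_eq_zero_of_neg_right _ (show (0 : ℤ) - 1 < 0 by norm_num), if_pos (by omega),
      if_pos ⟨rfl, rfl⟩]
    ring_nf
  · rw [if_neg h, if_neg (by omega), show (4 : ℚ) ^ (y + z) = 4 * 4 ^ (y + (z - 1)) by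
      rw [← zpow_one_add₀ (by norm_num)]; ring_nf]
    ring

theorem sbar_recurrence_n_general (m n : ℤ) :
    sbar m (n + 1) = sbar m n + 4 * sbar (m - 1) (n - 1) +
      (if n + 1 ≤ m then (4 : ℚ) ^ (n + 1) * C (m - n - 1) (n + 1) else 0) := by
  set B := Icc 0 m ×ˢ Icc 0 m
  have hB {M : ℤ} (hM : M ≤ m) : triangle M ⊆ B := fun p hp => by
    rw [mem_triangle] at hp
    simp only [B, mem_product, mem_Icc]
    omega
  let shift : ℤ × ℤ ≃ ℤ × ℤ := (Equiv.refl ℤ).prodCongr (Equiv.subRight 1)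
  have hshift : triangle (min (m - 1) (n - 1)) ⊆ B.map shift.toEmbedding := fun p hp => by
    rw [mem_triangle] at hp
    simp only [mem_map_equiv, shift, B, mem_product, mem_Icc, Equiv.prodCongr_symm,
      Equiv.prodCongr_apply, Prod.map_fst, Prod.map_snd, Equiv.refl_symm, Equiv.coe_refl, id_eq,
      Equiv.subRight_symm_apply]
    omega
  have hcorner : (if n + 1 ≤ m then (4 : ℚ) ^ (n + 1) * C (m - n - 1) (n + 1) else 0) =
      if (n + 1, 0) ∈ B then 4 ^ (n + 1) * C (m - n - 1) (n + 1) else 0 := by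
    simp only [B, mem_product, mem_Icc]
    split_ifs <;> first
      | rfl
      | rw [C_eq_zero_of_neg_right _ (by omega), mul_zero]
  rw [sbar_eq_sum_of_triangle_subset (hB (by omega)),
    sbar_eq_sum_of_triangle_subset (hB (by omega)),
    sbar_eq_sum_of_triangle_subset hshift, sum_map, hcorner]
  simp only [sbarTerm_add_one_right, sum_add_distrib, ← mul_sum, sum_ite_eq']
  rfl

theorem sbar_recurrence_n (m n : ℤ) (hm : 0 ≤ m) (hn : 0 ≤ n) :
    sbar m (n + 1) = sbar m n + 4 * sbar (m - 1) (n - 1) +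
      (if n + 1 ≤ m then (4 : ℚ) ^ (n + 1) * C (m - n - 1) (n + 1) else 0) :=
  sbar_recurrence_n_general m n
end
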